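/- arXiv:1804.02735 — 6 statements merged into one kernel-verified Lean document; each statement's English description precedes it below -/
import Mathlib

section
/- Tangent-line upper envelope of sine: for all x with |x| ≤ xᵐ where 0 < xᵐ < π, sin(x) ≤ cos(xᵐ/2)·(x − xᵐ/2) + sin(xᵐ/2). -/
/-!
With `a = xᵐ / 2`, the right-hand side is the tangent line of `sin` at `a`. On `[0, xᵐ] ⊆ [0, π]`
`sin` is concave, so it lies below its tangent. On `[-xᵐ, 0] ⊆ [-π, 0]` `sin` is convex, so it
suffices to compare at the two endpoints: at `0` this is the tangent bound again, and at `-xᵐ` it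
reads `3 a cos a ≤ sin a + sin 2a`, which is Huygens' inequality `3a ≤ 2 sin a + tan a`
multiplied by `cos a`.
-/

open Real Set

lemma ConcaveOn.le_tangent_of_hasDerivAt {S : Set ℝ} {f : ℝ → ℝ} {a x f' : ℝ}
    (hf : ConcaveOn ℝ S f) (ha : a ∈ S) (hx : x ∈ S) (hf' : HasDerivAt f f' a) :
    f x ≤ f' * (x - a) + f a := by
  rcases lt_trichotomy x a with hxa | rfl | hax
  · have h := hf.le_slope_of_hasDerivAt hx ha hxa hf'
    rw [slope_def_field, le_div_iff₀ (sub_pos.2 hxa)] at h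
    linarith
  · simp
  · have h := hf.slope_le_of_hasDerivAt ha hx hax hf'
    rw [slope_def_field, div_le_iff₀ (sub_pos.2 hax)] at h
    linarith

lemma ConvexOn.le_affine_of_mem_Icc {S : Set ℝ} {f : ℝ → ℝ} {p q z m a b : ℝ}
    (hf : ConvexOn ℝ S f) (hp : p ∈ S) (hq : q ∈ S) (hz : z ∈ Icc p q)
    (hfp : f p ≤ m * (p - a) + b) (hfq : f q ≤ m * (q - a) + b) :
    f z ≤ m * (z - a) + b := by
  rw [← segment_eq_Icc (hz.1.trans hz.2)] at hz
  obtain ⟨s, t, hs, ht, hst, rfl⟩ := hz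
  calc f (s • p + t • q) ≤ s • f p + t • f q := hf.2 hp hq hs ht hst
    _ ≤ s * (m * (p - a) + b) + t * (m * (q - a) + b) := by
      simp only [smul_eq_mul]; gcongr
    _ = m * (s • p + t • q - a) + b := by
      simp only [smul_eq_mul]; linear_combination (b - m * a) * hst

lemma Real.convexOn_sin_Icc_neg_pi_zero : ConvexOn ℝ (Icc (-π) 0) sin := by
  refine ⟨convex_Icc _ _, fun x hx y hy s t hs ht hst => ?_⟩
  have h := strictConcaveOn_sin_Icc.concaveOn.2 (x := -x) (y := -y)
    ⟨by linarith [hx.2], by linarith [hx.1]⟩ ⟨by linarith [hy.2], by linarith [hy.1]⟩ hs ht hst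
  simp only [smul_eq_mul, sin_neg] at h ⊢
  rw [show s * -x + t * -y = -(s * x + t * y) by ring, sin_neg] at h
  linarith

theorem Real.three_mul_le_two_mul_sin_add_tan {x : ℝ} (h0 : 0 ≤ x) (hx : x < π / 2) :
    3 * x ≤ 2 * sin x + tan x := by
  have hcos : ∀ y ∈ Ico 0 (π / 2), 0 < cos y := fun y hy =>
    cos_pos_of_mem_Ioo ⟨by linarith [pi_pos, hy.1], hy.2⟩
  have hmono : MonotoneOn (fun y => 2 * sin y + tan y - 3 * y) (Ico 0 (π / 2)) := by
    refine monotoneOn_of_hasDerivWithinAt_nonneg (f' := fun y => 2 * cos y + 1 / cos y ^ 2 - 3)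
      (convex_Ico 0 (π / 2)) ?_ (fun y hy => ?_) (fun y hy => ?_)
    · exact ((continuous_const.mul continuous_sin).continuousOn.add
        (continuousOn_tan.mono fun y hy => (hcos y hy).ne')).sub (by fun_prop)
    · exact ((((hasDerivAt_sin y).const_mul 2).add
        (hasDerivAt_tan (hcos y (interior_subset hy)).ne')).sub
        ((hasDerivAt_id y).const_mul 3)).hasDerivWithinAt.congr_deriv (by simp)
    · have hc := hcos y (interior_subset hy)
      have : 2 * cos y + 1 / cos y ^ 2 - 3 = (cos y - 1) ^ 2 * (2 * cos y + 1) / cos y ^ 2 := by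
        field_simp; ring
      simp only [this]
      positivity
  simpa using hmono ⟨le_rfl, pi_div_two_pos⟩ ⟨h0, hx⟩ h0

lemma Real.three_mul_mul_cos_le_sin_add_sin_two_mul {x : ℝ} (h0 : 0 ≤ x) (hx : x < π / 2) :
    3 * x * cos x ≤ sin x + sin (2 * x) := by
  have hc : 0 < cos x := cos_pos_of_mem_Ioo ⟨by linarith [pi_pos], hx⟩
  have h := mul_le_mul_of_nonneg_right (three_mul_le_two_mul_sin_add_tan h0 hx) hc.le
  rw [add_mul, tan_mul_cos hc.ne'] at h
  rw [sin_two_mul]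
  linarith

theorem stmt4 (xm x : ℝ) (h1 : 0 < xm) (h2 : xm < Real.pi) (h3 : |x| ≤ xm) :
    Real.sin x ≤ Real.cos (xm / 2) * (x - xm / 2) + Real.sin (xm / 2) := by
  obtain ⟨hxl, hxr⟩ := abs_le.mp h3
  set a := xm / 2
  have hxm : xm = 2 * a := by ring
  have ha : a ∈ Icc 0 π := ⟨by positivity, by linarith⟩
  have tangent {y : ℝ} (hy : y ∈ Icc 0 π) : sin y ≤ cos a * (y - a) + sin a :=
    strictConcaveOn_sin_Icc.concaveOn.le_tangent_of_hasDerivAt ha hy (hasDerivAt_sin a)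
  rcases le_total 0 x with hx | hx
  · exact tangent ⟨hx, by linarith⟩
  · refine convexOn_sin_Icc_neg_pi_zero.le_affine_of_mem_Icc (p := -xm) (q := 0)
      ⟨by linarith, by linarith⟩ ⟨by linarith, le_rfl⟩ ⟨hxl, hx⟩ ?_ (tangent ⟨le_rfl, pi_pos.le⟩)
    have := three_mul_mul_cos_le_sin_add_sin_two_mul ha.1 (by linarith : a < π / 2)
    rw [hxm, sin_neg]
    linarith
end

section
/- Tangent-line lower envelope of sine: for all x with |x| ≤ xᵐ where 0 < xᵐ < π, sin(x) ≥ cos(xᵐ/2)·(x + xᵐ/2) − sin(xᵐ/2). -/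
/-!
Put `c = xᵐ / 2`. The right-hand side is the tangent line of `sin` at `-c`, so the claim is
`g (-c) ≤ g x` for `g y = sin y - cos c * y`. Since `g' y = cos y - cos c`, `g` increases on
`[-c, c]` and decreases on `[c, π]`; as `g` is odd it also decreases on `[-π, -c]`. Hence on
`[-2c, 2c]` the minimum of `g` is attained at `-c` or at `2c`, and `g (-c) ≤ g (2c)` is the
inequality `3 c cos c ≤ sin 2c + sin c`, which vanishes to fifth order at `c = 0` and follows
from the Taylor bounds `sin u ≥ u - u³/6` and `cos 2u = 1 - 2 sin² u ≤ 1 - 2 (u - u³/6)²`.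
-/

open Real Set

namespace Real

lemma cos_two_mul_le_one_sub_two_mul_sq {u : ℝ} (hu : 0 ≤ u) (hu6 : u ^ 2 ≤ 6) :
    cos (2 * u) ≤ 1 - 2 * (u - u ^ 3 / 6) ^ 2 := by
  have hcubic_nonneg : 0 ≤ u - u ^ 3 / 6 := by nlinarith
  have hsq : (u - u ^ 3 / 6) ^ 2 ≤ sin u ^ 2 :=
    pow_le_pow_left₀ hcubic_nonneg (sin_ge_sub_cube hu) 2
  rw [cos_two_mul_eq_one_sub]
  linarith

lemma three_mul_mul_cos_le_sin_two_mul_add_sin {c : ℝ} (hc : 0 ≤ c) (hcπ : c ≤ π / 2) :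
    3 * c * cos c ≤ sin (2 * c) + sin c := by
  have hc_le : c ≤ 1.6 := by linarith [pi_lt_d2]
  have hcos_nonneg : 0 ≤ cos c := cos_nonneg_of_mem_Icc ⟨by linarith [pi_pos], hcπ⟩
  have hsin : c - c ^ 3 / 6 ≤ sin c := sin_ge_sub_cube hc
  have hcos : cos c ≤ 1 - 2 * (c / 2 - (c / 2) ^ 3 / 6) ^ 2 := by
    simpa only [mul_div_cancel₀ c two_ne_zero] using
      cos_two_mul_le_one_sub_two_mul_sq (u := c / 2) (by positivity) (by nlinarith)
  have hsin_term : 0 ≤ (sin c - (c - c ^ 3 / 6)) * (2 * cos c + 1) :=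
    mul_nonneg (by linarith) (by linarith)
  have hcos_term :
      0 ≤ (1 - 2 * (c / 2 - (c / 2) ^ 3 / 6) ^ 2 - cos c) * (c + c ^ 3 / 3) :=
    mul_nonneg (by linarith) (by positivity)
  -- after both substitutions the difference is `c⁵ (1/4 - 15 c²/576 + c⁴/1728) / 2`
  have hpoly : 0 ≤ c ^ 5 * (1 / 4 - 15 * c ^ 2 / 576 + c ^ 4 / 1728) :=
    mul_nonneg (by positivity) (by nlinarith)
  rw [sin_two_mul]
  linear_combination hsin_term + hcos_term + hpoly / 2

section TangentGap

variable {c : ℝ}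

lemma hasDerivAt_sin_sub_mul (a y : ℝ) :
    HasDerivAt (fun y => sin y - a * y) (cos y - a) y := by
  simpa using (hasDerivAt_sin y).fun_sub ((hasDerivAt_id' y).const_mul a)

lemma monotoneOn_sin_sub_cos_mul (hcπ : c ≤ π) :
    MonotoneOn (fun y => sin y - cos c * y) (Icc (-c) c) := by
  refine monotoneOn_of_hasDerivWithinAt_nonneg (convex_Icc _ _)
    (by fun_prop) (fun y _ => (hasDerivAt_sin_sub_mul _ y).hasDerivWithinAt) ?_
  intro y hy
  rw [interior_Icc] at hy
  have : cos c ≤ cos |y| :=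
    cos_le_cos_of_nonneg_of_le_pi (abs_nonneg y) hcπ (abs_le.mpr ⟨hy.1.le, hy.2.le⟩)
  rw [cos_abs] at this
  linarith

lemma antitoneOn_sin_sub_cos_mul (hc : 0 ≤ c) :
    AntitoneOn (fun y => sin y - cos c * y) (Icc c π) := by
  refine antitoneOn_of_hasDerivWithinAt_nonpos (convex_Icc _ _)
    (by fun_prop) (fun y _ => (hasDerivAt_sin_sub_mul _ y).hasDerivWithinAt) ?_
  intro y hy
  rw [interior_Icc] at hy
  linarith [cos_le_cos_of_nonneg_of_le_pi hc hy.2.le hy.1.le]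

lemma sin_sub_cos_mul_neg_le (hc : 0 ≤ c) (hcπ : c ≤ π / 2) {x : ℝ} (hx : |x| ≤ 2 * c) :
    sin (-c) - cos c * (-c) ≤ sin x - cos c * x := by
  set g : ℝ → ℝ := fun y => sin y - cos c * y
  change g (-c) ≤ g x
  have hg_odd (y : ℝ) : g (-y) = -g y := by simp only [g, sin_neg]; ring
  obtain ⟨hx_lo, hx_hi⟩ := abs_le.mp hx
  rcases le_total x (-c) with hx_le_neg | hx_ge_neg
  · have hreflected : g (-x) ≤ g c :=
      antitoneOn_sin_sub_cos_mul hc ⟨le_refl c, by linarith⟩ ⟨by linarith, by linarith⟩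
        (by linarith)
    rw [hg_odd c]
    linarith [hg_odd x]
  rcases le_total x c with hx_le | hx_ge
  · exact monotoneOn_sin_sub_cos_mul (by linarith) ⟨le_refl _, by linarith⟩
      ⟨hx_ge_neg, hx_le⟩ hx_ge_neg
  · have h2c : g (2 * c) ≤ g x :=
      antitoneOn_sin_sub_cos_mul hc ⟨hx_ge, by linarith⟩ ⟨by linarith, by linarith⟩ hx_hi
    have hendpoints : g (-c) ≤ g (2 * c) := by
      simp only [g, sin_neg]
      linarith [three_mul_mul_cos_le_sin_two_mul_add_sin hc hcπ]
    exact hendpoints.trans h2c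

end TangentGap

end Real

theorem stmt5_general (xm x : ℝ) (h2 : xm < Real.pi) (h3 : |x| ≤ xm) :
    Real.sin x ≥ Real.cos (xm / 2) * (x + xm / 2) - Real.sin (xm / 2) := by
  have hxm : 0 ≤ xm := (abs_nonneg x).trans h3
  have key : Real.sin (-(xm / 2)) - Real.cos (xm / 2) * -(xm / 2) ≤
      Real.sin x - Real.cos (xm / 2) * x :=
    Real.sin_sub_cos_mul_neg_le (by positivity) (by linarith) (by linarith)
  rw [Real.sin_neg] at key
  linarith

theorem stmt5 (xm x : ℝ) (h1 : 0 < xm) (h2 : xm < Real.pi) (h3 : |x| ≤ xm) :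
    Real.sin x ≥ Real.cos (xm / 2) * (x + xm / 2) - Real.sin (xm / 2) :=
  stmt5_general xm x h2 h3
end

section
/- Quadratic upper envelope of cosine: for xᵐ ∈ (0, π) and x with |x| ≤ xᵐ, cos(x) ≤ 1 − ((1 − cos(xᵐ))/(xᵐ)²)·x². -/
open Real Set

lemma aux_sin (a b : ℝ) (ha : 0 < a) (hab : a ≤ b) (hb : b ≤ π) :
    a * Real.sin b ≤ b * Real.sin a := by
  rcases eq_or_lt_of_le hab with rfl | hab
  · ring_nf; exact le_refl _
  have hb0 : 0 < b := ha.trans hab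
  have ht : a / b ∈ Icc (0:ℝ) 1 := ⟨by positivity, by rw [div_le_one hb0]; linarith⟩
  have h := strictConcaveOn_sin_Icc.concaveOn.2 ⟨le_rfl, pi_pos.le⟩
    ⟨hb0.le, hb⟩ (show (0:ℝ) ≤ 1 - a/b by linarith [ht.2]) ht.1 (by ring)
  simp only [smul_eq_mul, mul_zero, Real.sin_zero, zero_add, mul_zero] at h
  rw [show a/b*b = a by field_simp] at h
  calc a * Real.sin b = b * (a / b * Real.sin b) := by field_simp
    _ ≤ b * Real.sin a := by
        apply mul_le_mul_of_nonneg_left _ hb0.le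
        linarith

theorem stmt7 (xm x : ℝ) (h1 : 0 < xm) (h2 : xm < Real.pi) (h3 : |x| ≤ xm) :
    Real.cos x ≤ 1 - (1 - Real.cos xm) / xm ^ 2 * x ^ 2 := by
  have hax : Real.cos x = Real.cos |x| := by rcases abs_cases x with ⟨h,_⟩|⟨h,_⟩ <;> rw [h] <;> simp
  set a := |x| with ha
  have hx2 : x ^ 2 = a ^ 2 := (sq_abs x).symm
  have hand : 0 ≤ a := abs_nonneg x
  rw [hax, hx2]
  rcases eq_or_lt_of_le hand with h0 | h0
  · rw [← h0]; simp [Real.cos_le_one]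
  -- key: xm * sin (a/2) ≥ a * sin (xm/2)
  have key := aux_sin (a/2) (xm/2) (by linarith) (by linarith) (by linarith [Real.pi_pos])
  have hs1 : 0 ≤ Real.sin (a/2) := Real.sin_nonneg_of_nonneg_of_le_pi (by linarith)
    (by nlinarith [Real.pi_pos])
  have hs2 : 0 ≤ Real.sin (xm/2) := Real.sin_nonneg_of_nonneg_of_le_pi (by linarith) (by linarith)
  have hsq : (a/2 * Real.sin (xm/2))^2 ≤ (xm/2 * Real.sin (a/2))^2 := by
    apply sq_le_sq' _ key
    nlinarith
  have e1 : Real.cos a = 1 - 2 * Real.sin (a/2)^2 := by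
    have h := Real.cos_two_mul' (a/2)
    rw [show 2*(a/2) = a by ring] at h
    nlinarith [Real.sin_sq_add_cos_sq (a/2)]
  have e2 : Real.cos xm = 1 - 2 * Real.sin (xm/2)^2 := by
    have h := Real.cos_two_mul' (xm/2)
    rw [show 2*(xm/2) = xm by ring] at h
    nlinarith [Real.sin_sq_add_cos_sq (xm/2)]
  rw [e1, e2, div_mul_eq_mul_div, sub_le_sub_iff_left, div_le_iff₀ (by positivity : (0:ℝ) < xm^2)]
  nlinarith [hsq]
end

section
/- Meyer–Floudas facet validity (Case I, first facet): let V̲_l ≤ V_l ≤ V̄_l, V̲_m ≤ V_m ≤ V̄_m with 0 ≤ V̲_l and 0 ≤ V̲_m, and let s̲ ≤ S ≤ s̄ with s̄ ≤ 0. Then V_l V_m S ≥ V̄_m s̲ V_l + V̲_l s̲ V_m + V̲_l V̲_m S − V̲_l V̄_m s̲ − V̲_l V̲_m s̲. -/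
theorem stmt16_general (Vl Vm S Vll Vml Vmu sl su : ℝ)
    (hVl1 : Vll ≤ Vl) (hVm1 : Vml ≤ Vm) (hVm2 : Vm ≤ Vmu)
    (hVl0 : 0 ≤ Vll) (hVm0 : 0 ≤ Vml)
    (hS1 : sl ≤ S) (hS2 : S ≤ su) (hsu : su ≤ 0) :
    Vl * Vm * S ≥ Vmu * sl * Vl + Vll * sl * Vm + Vll * Vml * S
      - Vll * Vmu * sl - Vll * Vml * sl := by
  have hsl : sl ≤ 0 := hS1.trans (hS2.trans hsu)
  have gap_eq : Vl * Vm * S - (Vmu * sl * Vl + Vll * sl * Vm + Vll * Vml * S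
      - Vll * Vmu * sl - Vll * Vml * sl) =
      Vll * (Vm - Vml) * (S - sl) + (Vl - Vll) * Vm * (S - sl)
        + (Vl - Vll) * (Vmu - Vm) * (-sl) := by
    ring
  have gap_nonneg : 0 ≤ Vll * (Vm - Vml) * (S - sl) + (Vl - Vll) * Vm * (S - sl)
      + (Vl - Vll) * (Vmu - Vm) * (-sl) := by
    have hVm : 0 ≤ Vm := hVm0.trans hVm1
    rw [← sub_nonneg] at hVl1 hVm1 hVm2 hS1
    have hsl' : 0 ≤ -sl := neg_nonneg.2 hsl
    positivity
  linarith

theorem stmt16 (Vl Vm S Vll Vlu Vml Vmu sl su : ℝ)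
    (hVl1 : Vll ≤ Vl) (hVl2 : Vl ≤ Vlu) (hVm1 : Vml ≤ Vm) (hVm2 : Vm ≤ Vmu)
    (hVl0 : 0 ≤ Vll) (hVm0 : 0 ≤ Vml)
    (hS1 : sl ≤ S) (hS2 : S ≤ su) (hsu : su ≤ 0) :
    Vl * Vm * S ≥ Vmu * sl * Vl + Vll * sl * Vm + Vll * Vml * S
      - Vll * Vmu * sl - Vll * Vml * sl :=
  stmt16_general Vl Vm S Vll Vml Vmu sl su hVl1 hVm1 hVm2 hVl0 hVm0 hS1 hS2 hsu
end

section
/- Meyer–Floudas facet validity (Case II, first facet): let 0 ≤ V̲_l ≤ V_l ≤ V̄_l, 0 ≤ V̲_m ≤ V_m ≤ V̄_m, and 0 ≤ s̲ ≤ S ≤ s̄. Then V_l V_m S ≤ V̲_m s̲ V_l + V̄_l s̲ V_m + V̄_l V̄_m S − V̄_l V̄_m s̲ − V̄_l V̲_m s̲. -/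
theorem stmt17 (Vl Vm S Vll Vlu Vml Vmu sl su : ℝ)
    (hVl0 : 0 ≤ Vll) (hVl1 : Vll ≤ Vl) (hVl2 : Vl ≤ Vlu)
    (hVm0 : 0 ≤ Vml) (hVm1 : Vml ≤ Vm) (hVm2 : Vm ≤ Vmu)
    (hs0 : 0 ≤ sl) (hS1 : sl ≤ S) (hS2 : S ≤ su) :
    Vl * Vm * S ≤ Vml * sl * Vl + Vlu * sl * Vm + Vlu * Vmu * S
      - Vlu * Vmu * sl - Vlu * Vml * sl := by
  have hVmu : 0 ≤ Vmu := hVm0.trans (hVm1.trans hVm2)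
  have hVl : 0 ≤ Vl := hVl0.trans hVl1
  nlinarith [mul_nonneg (mul_nonneg (sub_nonneg.2 hVl2) hVmu) (sub_nonneg.2 hS1),
    mul_nonneg (mul_nonneg hVl (sub_nonneg.2 hVm2)) (sub_nonneg.2 hS1),
    mul_nonneg (mul_nonneg hs0 (sub_nonneg.2 hVm1)) (sub_nonneg.2 hVl2)]
end

section
/- Meyer–Floudas facet validity (Case III, first two facets): let 0 ≤ V̲_l ≤ V_l ≤ V̄_l, 0 ≤ V̲_m ≤ V_m ≤ V̄_m, and 0 ≤ s̲ ≤ S ≤ s̄. Then V_l V_m S ≥ V̲_m s̲ V_l + V̲_l s̲ V_m + V̲_l V̲_m S − 2 V̲_l V̲_m s̲ and V_l V_m S ≥ V̄_m s̄ V_l + V̄_l s̄ V_m + V̄_l V̄_m S − 2 V̄_l V̄_m s̄. -/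
/-!
Both inequalities are instances of one identity: for any point `(x₀, y₀, z₀)`, the gap between
`x y z` and its linearisation `y₀ z₀ x + x₀ z₀ y + x₀ y₀ z - 2 x₀ y₀ z₀` at that point equals
`(x - x₀)(y - y₀) z + (x - x₀)(z - z₀) y₀ + (y - y₀)(z - z₀) x₀`.
At the lower corner of the box all three differences are nonnegative, at the upper corner all
three are nonpositive; in both cases every pairwise product of differences is nonnegative.
-/

theorem trilinear_sub_linearization {R : Type*} [CommRing R] (x y z x₀ y₀ z₀ : R) :
    x * y * z - (y₀ * z₀ * x + x₀ * z₀ * y + x₀ * y₀ * z - 2 * (x₀ * y₀ * z₀)) =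
      (x - x₀) * (y - y₀) * z + (x - x₀) * (z - z₀) * y₀ + (y - y₀) * (z - z₀) * x₀ := by
  ring

section Trilinear

variable {R : Type*} [CommRing R] [LinearOrder R] [IsStrictOrderedRing R]

theorem linearization_le_trilinear {x y z x₀ y₀ z₀ : R}
    (hxy : 0 ≤ (x - x₀) * (y - y₀)) (hxz : 0 ≤ (x - x₀) * (z - z₀))
    (hyz : 0 ≤ (y - y₀) * (z - z₀)) (hz : 0 ≤ z) (hx₀ : 0 ≤ x₀) (hy₀ : 0 ≤ y₀) :
    y₀ * z₀ * x + x₀ * z₀ * y + x₀ * y₀ * z - 2 * (x₀ * y₀ * z₀) ≤ x * y * z := by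
  rw [← sub_nonneg, trilinear_sub_linearization]
  positivity

theorem linearization_le_trilinear_of_lower {x y z x₀ y₀ z₀ : R}
    (hx₀ : 0 ≤ x₀) (hy₀ : 0 ≤ y₀) (hz₀ : 0 ≤ z₀) (hx : x₀ ≤ x) (hy : y₀ ≤ y) (hz : z₀ ≤ z) :
    y₀ * z₀ * x + x₀ * z₀ * y + x₀ * y₀ * z - 2 * (x₀ * y₀ * z₀) ≤ x * y * z := by
  rw [← sub_nonneg] at hx hy hz
  exact linearization_le_trilinear (mul_nonneg hx hy) (mul_nonneg hx hz) (mul_nonneg hy hz)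
    (hz₀.trans (sub_nonneg.1 hz)) hx₀ hy₀

theorem linearization_le_trilinear_of_upper {x y z x₁ y₁ z₁ : R}
    (hx : 0 ≤ x) (hy : 0 ≤ y) (hz : 0 ≤ z) (hx₁ : x ≤ x₁) (hy₁ : y ≤ y₁) (hz₁ : z ≤ z₁) :
    y₁ * z₁ * x + x₁ * z₁ * y + x₁ * y₁ * z - 2 * (x₁ * y₁ * z₁) ≤ x * y * z := by
  rw [← sub_nonpos] at hx₁ hy₁ hz₁
  exact linearization_le_trilinear (mul_nonneg_of_nonpos_of_nonpos hx₁ hy₁)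
    (mul_nonneg_of_nonpos_of_nonpos hx₁ hz₁) (mul_nonneg_of_nonpos_of_nonpos hy₁ hz₁) hz
    (hx.trans (sub_nonpos.1 hx₁)) (hy.trans (sub_nonpos.1 hy₁))

end Trilinear

theorem stmt18 (Vl Vm S Vll Vlu Vml Vmu sl su : ℝ)
    (hVl0 : 0 ≤ Vll) (hVl1 : Vll ≤ Vl) (hVl2 : Vl ≤ Vlu)
    (hVm0 : 0 ≤ Vml) (hVm1 : Vml ≤ Vm) (hVm2 : Vm ≤ Vmu)
    (hs0 : 0 ≤ sl) (hS1 : sl ≤ S) (hS2 : S ≤ su) :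
    Vl * Vm * S ≥ Vml * sl * Vl + Vll * sl * Vm + Vll * Vml * S - 2 * (Vll * Vml * sl) ∧
    Vl * Vm * S ≥ Vmu * su * Vl + Vlu * su * Vm + Vlu * Vmu * S - 2 * (Vlu * Vmu * su) :=
  ⟨linearization_le_trilinear_of_lower hVl0 hVm0 hs0 hVl1 hVm1 hS1,
    linearization_le_trilinear_of_upper (hVl0.trans hVl1) (hVm0.trans hVm1) (hs0.trans hS1)
      hVl2 hVm2 hS2⟩
end
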